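/- Let N ≥ 1 and let λ : Fin N → ℝ be strictly positive, with modified Rényi entropy S̃(n) = log(Σ_k λ_k^n) − n·(Σ_k λ_k^n log λ_k)/(Σ_k λ_k^n). For n > 0 define the tilted probability weights p_k(n) = λ_k^n / Σ_j λ_j^n. Then for every n > 0, S̃'(n) = −n·[ Σ_k p_k(n) (log λ_k)² − (Σ_k p_k(n) log λ_k)² ], i.e. the derivative of S̃ at n equals −n times the variance of log λ under the tilted distribution p(n). -/

import Mathlib

/-!
Write `Z = Σ λ_k^n`, `A = Σ λ_k^n log λ_k`, `B = Σ λ_k^n (log λ_k)²`. Since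
`d/dn λ^n = λ^n log λ`, we have `Z' = A` and `A' = B`, so
`S̃' = A/Z − (A + nB)/Z + nA²/Z² = −n (B/Z − (A/Z)²)`, and `B/Z`, `A/Z` are the first two
moments of `log λ` under the tilted weights.
-/

open scoped BigOperators

noncomputable def modifiedRenyi {N : ℕ} (lam : Fin N → ℝ) (n : ℝ) : ℝ :=
  Real.log (∑ k, lam k ^ n) -
    n * (∑ k, lam k ^ n * Real.log (lam k)) / (∑ k, lam k ^ n)

noncomputable def tiltedWeight {N : ℕ} (lam : Fin N → ℝ) (n : ℝ) (k : Fin N) : ℝ :=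
  lam k ^ n / ∑ j, lam j ^ n

open Real

theorem hasDerivAt_sum_rpow_mul {ι : Type*} [Fintype ι] {lam : ι → ℝ} (hlam : ∀ k, 0 < lam k)
    (c : ι → ℝ) (m : ℝ) :
    HasDerivAt (fun x => ∑ k, lam k ^ x * c k) (∑ k, lam k ^ m * (log (lam k) * c k)) m := by
  refine HasDerivAt.fun_sum fun k _ => ?_
  simpa only [mul_assoc] using
    ((hasStrictDerivAt_const_rpow (hlam k) m).hasDerivAt).mul_const (c k)

theorem hasDerivAt_sum_rpow {ι : Type*} [Fintype ι] {lam : ι → ℝ} (hlam : ∀ k, 0 < lam k)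
    (m : ℝ) : HasDerivAt (fun x => ∑ k, lam k ^ x) (∑ k, lam k ^ m * log (lam k)) m := by
  simpa using hasDerivAt_sum_rpow_mul hlam 1 m

theorem hasDerivAt_modifiedRenyi {N : ℕ} [Nonempty (Fin N)] {lam : Fin N → ℝ}
    (hlam : ∀ k, 0 < lam k) (n : ℝ) :
    HasDerivAt (modifiedRenyi lam)
      (-n * ((∑ k, lam k ^ n * log (lam k) ^ 2) / ∑ k, lam k ^ n -
        ((∑ k, lam k ^ n * log (lam k)) / ∑ k, lam k ^ n) ^ 2)) n := by
  have hZ : ∑ k, lam k ^ n ≠ 0 :=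
    (Finset.sum_pos (fun k _ => rpow_pos_of_pos (hlam k) n) Finset.univ_nonempty).ne'
  have hA := hasDerivAt_sum_rpow_mul hlam (fun k => log (lam k)) n
  simp only [← sq] at hA
  have hS : HasDerivAt (modifiedRenyi lam) _ n :=
    ((hasDerivAt_sum_rpow hlam n).log hZ).fun_sub
      (((hasDerivAt_id' n).fun_mul hA).fun_div (hasDerivAt_sum_rpow hlam n) hZ)
  refine hS.congr_deriv ?_
  field_simp
  ring

theorem sum_tiltedWeight_mul {N : ℕ} (lam : Fin N → ℝ) (n : ℝ) (f : Fin N → ℝ) :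
    ∑ k, tiltedWeight lam n k * f k = (∑ k, lam k ^ n * f k) / ∑ k, lam k ^ n := by
  simp only [tiltedWeight, div_mul_eq_mul_div, Finset.sum_div]

theorem deriv_modifiedRenyi_eq_neg_mul_variance_general {N : ℕ} (hN : 1 ≤ N)
    (lam : Fin N → ℝ) (hpos : ∀ k, 0 < lam k) (n : ℝ) :
    deriv (modifiedRenyi lam) n =
      -n * ((∑ k, tiltedWeight lam n k * (Real.log (lam k)) ^ 2) -
        (∑ k, tiltedWeight lam n k * Real.log (lam k)) ^ 2) := by
  have : Nonempty (Fin N) := Fin.pos_iff_nonempty.mp hN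
  rw [sum_tiltedWeight_mul, sum_tiltedWeight_mul]
  exact (hasDerivAt_modifiedRenyi hpos n).deriv

/-- For a strictly positive vector `λ : Fin N → ℝ` (`N ≥ 1`) and every `n > 0`,
the derivative of the modified Rényi entropy equals `−n` times the variance of `log λ` under the
tilted distribution `p(n)`:
`S̃'(n) = −n·[ Σ_k p_k(n)(log λ_k)² − (Σ_k p_k(n) log λ_k)² ]`. -/
theorem deriv_modifiedRenyi_eq_neg_mul_variance {N : ℕ} (hN : 1 ≤ N)
    (lam : Fin N → ℝ) (hpos : ∀ k, 0 < lam k) (n : ℝ) (hn : 0 < n) :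
    deriv (modifiedRenyi lam) n =
      -n * ((∑ k, tiltedWeight lam n k * (Real.log (lam k)) ^ 2) -
        (∑ k, tiltedWeight lam n k * Real.log (lam k)) ^ 2) :=
  deriv_modifiedRenyi_eq_neg_mul_variance_general hN lam hpos n
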